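/- Let n ≥ 2, α ∈ [0, 1/2], τ' ∈ (−1,1), X a measurable space, and D a probability measure on X × [n]. Then for every measurable g : X → R^n, er^{ℓ^α}_D[pred^OVA_{τ'} ∘ g] − er^{ℓ^α,*}_D ≤ ( er^{ψ^{OVA,α}}_D[g] − er^{ψ^{OVA,α},*}_D ) / ( 2(1 − |τ'|) ). -/

import Mathlib

open scoped BigOperators
open MeasureTheory

/-- The abstain(α) loss: `ℓ^α(y,t) = 0` if `t = y`, `α` if `t = n+1`, and `1` otherwise. -/
noncomputable def abstainLoss (n : ℕ) (α : ℝ) (y : Fin n) (t : Fin (n + 1)) : ℝ :=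
  if t = Fin.last n then α else if (t : ℕ) = (y : ℕ) then 0 else 1

/-- Generalized one-vs-all hinge surrogate:
`ψ^{OVA,α}(y,u) = 2α(1 − u_y)_+ + 2(1−α) Σ_{i≠y} (1 + u_i)_+`. -/
noncomputable def psiOVAa (n : ℕ) (α : ℝ) (y : Fin n) (u : Fin n → ℝ) : ℝ :=
  2 * α * max (1 - u y) 0 + 2 * (1 - α) * ∑ i ∈ Finset.univ.erase y, max (1 + u i) 0

/-- `pred^OVA_τ`: the smallest index attaining `max_i u_i` if `max_j u_j > τ`,
and `n+1` otherwise. -/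
noncomputable def predOVA (n : ℕ) (τ : ℝ) (u : Fin n → ℝ) : Fin (n + 1) :=
  if h : ∃ y : Fin n, (∀ i, u i ≤ u y) ∧ τ < u y then
    Fin.castSucc ((Finset.univ.filter fun y : Fin n => (∀ i, u i ≤ u y) ∧ τ < u y).min'
      (by obtain ⟨y, hy⟩ := h; exact ⟨y, by simpa using hy⟩))
  else Fin.last n

open scoped ENNReal

/-!
Disintegrating `D` along `X` reduces both excess risks to conditional risks at the vector `q` of
class probabilities. Given `q`, the surrogate conditional risk is a sum over classes of hinge pairs
`a i * (1 - u i)₊ + b i * (1 + u i)₊` with `a i = 2αqᵢ` and `b i = 2(1-α)(1-qᵢ)`. Each pair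
exceeds its minimum `2 min (a i) (b i)` by at least `2 (|dᵢ| + dᵢ cᵢ)`, where `dᵢ = 1 - α - qᵢ`
and `cᵢ` is `u i` clipped to `[-1, 1]`. A case analysis on what `predOVA` predicts bounds
`1 - |τ|` times the conditional abstain excess by `∑ᵢ (|dᵢ| + dᵢ cᵢ)`. Integrating then gives the
theorem: the Bayes abstain risk is at least the integral of the pointwise minimum, and the
surrogate infimum is at most the integral of its pointwise minimum, which is attained at `uᵢ = ±1`.
-/

section Pointwise

variable {n : ℕ}

lemma predOVA_cases (τ : ℝ) (u : Fin n → ℝ) :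
    (∃ r, predOVA n τ u = Fin.castSucc r ∧ (∀ i, u i ≤ u r) ∧ τ < u r) ∨
      (predOVA n τ u = Fin.last n ∧ ∀ i, u i ≤ τ) := by
  unfold predOVA
  split_ifs with h
  · refine .inl ⟨_, rfl, ?_⟩
    exact (Finset.mem_filter.1 <| Finset.min'_mem
      (Finset.univ.filter fun y => (∀ i, u i ≤ u y) ∧ τ < u y) _).2
  · refine .inr ⟨rfl, fun i => ?_⟩
    have : Nonempty (Fin n) := ⟨i⟩
    obtain ⟨r, hr⟩ := Finite.exists_max u
    exact (hr i).trans (not_lt.1 fun hτr => h ⟨r, hr, hτr⟩)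

lemma measurable_predOVA (τ : ℝ) : Measurable (predOVA n τ) := by
  classical
  let select : (Fin n → Prop) → Fin (n + 1) := fun S =>
    if h : ∃ y, S y then
      Fin.castSucc ((Finset.univ.filter S).min'
        (by obtain ⟨y, hy⟩ := h; exact ⟨y, Finset.mem_filter.2 ⟨Finset.mem_univ _, hy⟩⟩))
    else Fin.last n
  have hfactor : predOVA n τ = select ∘ fun u y => (∀ i, u i ≤ u y) ∧ τ < u y := by
    funext u
    simp only [predOVA, select, Function.comp_apply]
    congr!
  rw [hfactor]
  refine (measurable_of_countable select).comp (measurable_pi_lambda _ fun y => ?_)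
  refine (Measurable.forall fun i => ?_).and ?_
  · exact measurableSet_setOfPred.1
      (measurableSet_le (measurable_pi_apply i) (measurable_pi_apply y))
  · exact measurableSet_setOfPred.1 (measurableSet_lt measurable_const (measurable_pi_apply y))

lemma abs_add_mul_nonneg {x c : ℝ} (h1 : -1 ≤ c) (h2 : c ≤ 1) : 0 ≤ |x| + x * c := by
  rcases le_total 0 x with hx | hx
  · rw [abs_of_nonneg hx]; nlinarith
  · rw [abs_of_nonpos hx]; nlinarith

lemma one_sub_abs_mul_le_abs_add_mul {x c τ : ℝ} (hτ : |τ| ≤ 1) (hτc : τ ≤ c) (hc : c ≤ 1) :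
    (1 - |τ|) * x ≤ |x| + x * c := by
  rcases le_total 0 x with hx | hx
  · rw [abs_of_nonneg hx]; nlinarith [neg_abs_le τ]
  · rw [abs_of_nonpos hx]; nlinarith

lemma one_sub_abs_mul_sub_le {x y cx cy τ : ℝ} (hxy : 0 ≤ x + y) (hτ : |τ| ≤ 1) (hτc : τ ≤ cx)
    (hc : cy ≤ cx) (hcx : cx ≤ 1) (hcy : -1 ≤ cy) :
    (1 - |τ|) * (x - y) ≤ (|x| + x * cx) + (|y| + y * cy) := by
  rcases le_total 0 y with hy | hy
  · have := one_sub_abs_mul_le_abs_add_mul (x := x) hτ hτc hcx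
    have := abs_add_mul_nonneg (x := y) hcy (hc.trans hcx)
    nlinarith
  · rw [abs_of_nonneg (by linarith : 0 ≤ x), abs_of_nonpos hy]
    nlinarith [neg_abs_le τ, le_abs_self τ]

def unitClip (s : ℝ) : ℝ := max (min s 1) (-1)

lemma neg_one_le_unitClip (s : ℝ) : -1 ≤ unitClip s := le_max_right _ _

lemma unitClip_le_one (s : ℝ) : unitClip s ≤ 1 := max_le (min_le_right _ _) (by norm_num)

lemma unitClip_mono : Monotone unitClip := fun _ _ h => max_le_max_right _ (min_le_min_right _ h)

lemma hinge_pair_ge_unitClip {a b : ℝ} (ha : 0 ≤ a) (hb : 0 ≤ b) (s : ℝ) :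
    a * (1 - unitClip s) + b * (1 + unitClip s) ≤ a * max (1 - s) 0 + b * max (1 + s) 0 := by
  have h₁ := le_max_left (1 - s) 0
  have h₂ := le_max_left (1 + s) 0
  have h₃ := le_max_right (1 - s) 0
  have h₄ := le_max_right (1 + s) 0
  rcases le_total s (-1) with hs | hs
  · rw [unitClip, min_eq_left (by linarith), max_eq_right hs]; nlinarith
  rcases le_total s 1 with hs' | hs'
  · rw [unitClip, min_eq_left hs', max_eq_left hs]; nlinarith
  · rw [unitClip, min_eq_right hs', max_eq_left (by norm_num)]; nlinarith

noncomputable def abstainRisk (α : ℝ) (q : Fin n → ℝ) (t : Fin (n + 1)) : ℝ :=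
  ∑ y, q y * abstainLoss n α y t

noncomputable def abstainRiskMin (α : ℝ) (q : Fin n → ℝ) : ℝ :=
  Finset.univ.inf' Finset.univ_nonempty (abstainRisk α q)

noncomputable def psiRisk (α : ℝ) (q u : Fin n → ℝ) : ℝ :=
  ∑ y, q y * psiOVAa n α y u

noncomputable def psiRiskMin (α : ℝ) (q : Fin n → ℝ) : ℝ :=
  ∑ i, 2 * min (2 * α * q i) (2 * (1 - α) * (1 - q i))

noncomputable def psiMinimizer (α : ℝ) (q : Fin n → ℝ) (i : Fin n) : ℝ :=
  if q i ≤ 1 - α then -1 else 1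

noncomputable def psiExcessBound (α : ℝ) (q u : Fin n → ℝ) : ℝ :=
  ∑ i, (|1 - α - q i| + (1 - α - q i) * unitClip (u i))

section ConditionalRisk

variable {α : ℝ} {q : Fin n → ℝ}

lemma abstainLoss_nonneg (hα : 0 ≤ α) (y : Fin n) (t : Fin (n + 1)) :
    0 ≤ abstainLoss n α y t := by
  unfold abstainLoss; split_ifs <;> norm_num [hα]

lemma psiOVAa_nonneg (hα0 : 0 ≤ α) (hα1 : α ≤ 1) (y : Fin n) (u : Fin n → ℝ) :
    0 ≤ psiOVAa n α y u := by
  unfold psiOVAa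
  have := Finset.sum_nonneg fun i (_ : i ∈ Finset.univ.erase y) => le_max_right (1 + u i) 0
  have := le_max_right (1 - u y) 0
  have : 0 ≤ 1 - α := by linarith
  positivity

lemma continuous_psiOVAa (y : Fin n) : Continuous (psiOVAa n α y) := by
  unfold psiOVAa; fun_prop

lemma continuous_abstainRiskMin : Continuous (abstainRiskMin (n := n) α) := by
  unfold abstainRiskMin abstainRisk
  exact Continuous.finset_inf'_apply _ fun t _ => by fun_prop

lemma continuous_psiRiskMin : Continuous (psiRiskMin (n := n) α) := by
  unfold psiRiskMin; fun_prop

lemma abstainRisk_last (hq : ∑ i, q i = 1) : abstainRisk α q (Fin.last n) = α := by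
  simp [abstainRisk, abstainLoss, ← Finset.sum_mul, hq]

lemma abstainRisk_castSucc (hq : ∑ i, q i = 1) (j : Fin n) :
    abstainRisk α q (Fin.castSucc j) = 1 - q j := by
  have hloss : ∀ y, abstainLoss n α y (Fin.castSucc j) = 1 - if y = j then 1 else 0 := by
    intro y
    rcases eq_or_ne y j with rfl | h
    · simp [abstainLoss, (Fin.castSucc_lt_last y).ne]
    · simp [abstainLoss, (Fin.castSucc_lt_last j).ne, Fin.val_eq_val, h, h.symm]
  simp [abstainRisk, hloss, mul_sub, hq]

lemma abstainRiskMin_nonneg (hα : 0 ≤ α) (hq0 : ∀ i, 0 ≤ q i) : 0 ≤ abstainRiskMin α q :=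
  Finset.le_inf' _ _ fun t _ =>
    Finset.sum_nonneg fun y _ => mul_nonneg (hq0 y) (abstainLoss_nonneg hα y t)

lemma psiRisk_eq_sum_hinge (hq : ∑ i, q i = 1) (u : Fin n → ℝ) :
    psiRisk α q u = ∑ i, (2 * α * q i * max (1 - u i) 0
      + 2 * (1 - α) * (1 - q i) * max (1 + u i) 0) := by
  set h : Fin n → ℝ := fun i => max (1 + u i) 0
  have hS : ∑ y, q y * ∑ i, h i = ∑ i, h i := by rw [← Finset.sum_mul, hq, one_mul]
  simp only [psiRisk, psiOVAa, Finset.sum_erase_eq_sub (Finset.mem_univ _)]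
  rw [← sub_eq_zero, ← Finset.sum_sub_distrib]
  calc _ = ∑ y, 2 * (1 - α) * (q y * ∑ i, h i - h y) :=
        Finset.sum_congr rfl fun y _ => by ring
    _ = 0 := by rw [← Finset.mul_sum, Finset.sum_sub_distrib, hS, sub_self, mul_zero]

lemma psiExcessBound_nonneg (u : Fin n → ℝ) : 0 ≤ psiExcessBound α q u :=
  Finset.sum_nonneg fun _ _ => abs_add_mul_nonneg (neg_one_le_unitClip _) (unitClip_le_one _)

lemma psiRiskMin_add_le_psiRisk (hα0 : 0 ≤ α) (hα1 : α ≤ 1) (hq0 : ∀ i, 0 ≤ q i)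
    (hq : ∑ i, q i = 1) (u : Fin n → ℝ) :
    psiRiskMin α q + 2 * psiExcessBound α q u ≤ psiRisk α q u := by
  rw [psiRisk_eq_sum_hinge hq, psiRiskMin, psiExcessBound, Finset.mul_sum,
    ← Finset.sum_add_distrib]
  refine Finset.sum_le_sum fun i _ => ?_
  have hqi : q i ≤ 1 := hq ▸ Finset.single_le_sum (fun j _ => hq0 j) (Finset.mem_univ i)
  set c := unitClip (u i)
  calc _ = 2 * α * q i * (1 - c) + 2 * (1 - α) * (1 - q i) * (1 + c) := by
        rcases le_total (q i) (1 - α) with h | h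
        · rw [min_eq_left (by nlinarith), abs_of_nonneg (by linarith)]; ring
        · rw [min_eq_right (by nlinarith), abs_of_nonpos (by linarith)]; ring
    _ ≤ _ := hinge_pair_ge_unitClip (mul_nonneg (by linarith) (hq0 i))
        (mul_nonneg (by linarith) (by linarith)) (u i)

lemma psiRiskMin_le_psiRisk (hα0 : 0 ≤ α) (hα1 : α ≤ 1) (hq0 : ∀ i, 0 ≤ q i)
    (hq : ∑ i, q i = 1) (u : Fin n → ℝ) : psiRiskMin α q ≤ psiRisk α q u := by
  linarith [psiRiskMin_add_le_psiRisk hα0 hα1 hq0 hq u, psiExcessBound_nonneg (α := α) (q := q) u]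

lemma psiRisk_psiMinimizer (hq : ∑ i, q i = 1) :
    psiRisk α q (psiMinimizer α q) = psiRiskMin α q := by
  rw [psiRisk_eq_sum_hinge hq, psiRiskMin]
  refine Finset.sum_congr rfl fun i _ => ?_
  unfold psiMinimizer
  split_ifs with h
  · rw [min_eq_left (by nlinarith)]; norm_num; ring
  · rw [min_eq_right (by nlinarith)]; norm_num; ring

lemma psiRiskMin_nonneg (hα0 : 0 ≤ α) (hα1 : α ≤ 1) (hq0 : ∀ i, 0 ≤ q i)
    (hq : ∑ i, q i = 1) : 0 ≤ psiRiskMin α q := by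
  refine Finset.sum_nonneg fun i _ => ?_
  have hqi : q i ≤ 1 := hq ▸ Finset.single_le_sum (fun j _ => hq0 j) (Finset.mem_univ i)
  have := mul_nonneg (mul_nonneg zero_le_two hα0) (hq0 i)
  have := mul_nonneg (mul_nonneg zero_le_two (sub_nonneg.2 hα1)) (sub_nonneg.2 hqi)
  positivity

lemma psiRiskMin_le (hq : ∑ i, q i = 1) : psiRiskMin α q ≤ 4 * α := by
  calc psiRiskMin α q ≤ ∑ i, 2 * (2 * α * q i) :=
        Finset.sum_le_sum fun i _ => by gcongr; exact min_le_left _ _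
    _ = 4 * α := by rw [← Finset.mul_sum, ← Finset.mul_sum, hq]; ring

lemma abstainRisk_predOVA_sub_le_psiExcessBound (hα : α ≤ 1 / 2) {τ : ℝ} (hτ : |τ| < 1)
    (hq0 : ∀ i, 0 ≤ q i) (hq : ∑ i, q i = 1) (u : Fin n → ℝ) (t : Fin (n + 1)) :
    (1 - |τ|) * (abstainRisk α q (predOVA n τ u) - abstainRisk α q t) ≤
      psiExcessBound α q u := by
  set d : Fin n → ℝ := fun i => 1 - α - q i
  set c : Fin n → ℝ := fun i => unitClip (u i)
  have hT : ∀ i ∈ Finset.univ, 0 ≤ |d i| + d i * c i := fun i _ =>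
    abs_add_mul_nonneg (neg_one_le_unitClip _) (unitClip_le_one _)
  have hsingle : ∀ i, |d i| + d i * c i ≤ psiExcessBound α q u := fun i =>
    Finset.single_le_sum hT (Finset.mem_univ i)
  have hτ' := abs_le.1 hτ.le
  rcases predOVA_cases τ u with ⟨r, hpred, hmax, hτr⟩ | ⟨hpred, hle⟩ <;> rw [hpred]
  · have hτc : τ ≤ c r := le_max_of_le_left (le_min hτr.le hτ'.2)
    induction t using Fin.lastCases with
    | last =>
      rw [abstainRisk_castSucc hq, abstainRisk_last hq]
      calc _ = (1 - |τ|) * d r := by ring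
        _ ≤ _ := (one_sub_abs_mul_le_abs_add_mul hτ.le hτc (unitClip_le_one _)).trans (hsingle r)
    | cast j =>
      rw [abstainRisk_castSucc hq, abstainRisk_castSucc hq]
      rcases eq_or_ne r j with rfl | hrj
      · simpa using psiExcessBound_nonneg u
      -- with `α ≤ 1 / 2`, this forces `d r + d j ≥ 0`
      have hpair : q r + q j ≤ 1 :=
        hq ▸ Finset.add_le_sum (fun i _ => hq0 i) (Finset.mem_univ r) (Finset.mem_univ j) hrj
      calc _ = (1 - |τ|) * (d r - d j) := by ring
        _ ≤ (|d r| + d r * c r) + (|d j| + d j * c j) :=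
          one_sub_abs_mul_sub_le (by linarith) hτ.le hτc (unitClip_mono (hmax j))
            (unitClip_le_one _) (neg_one_le_unitClip _)
        _ ≤ _ := Finset.add_le_sum hT (Finset.mem_univ r) (Finset.mem_univ j) hrj
  · induction t using Fin.lastCases with
    | last => simpa using psiExcessBound_nonneg u
    | cast j =>
      rw [abstainRisk_last hq, abstainRisk_castSucc hq]
      have hcτ : c j ≤ τ := max_le ((min_le_left _ _).trans (hle j)) hτ'.1
      have := one_sub_abs_mul_le_abs_add_mul (x := -d j) (τ := -τ) (by rw [abs_neg]; exact hτ.le)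
        (neg_le_neg hcτ) (by linarith [neg_one_le_unitClip (u j)])
      rw [abs_neg, abs_neg] at this
      calc _ = (1 - |τ|) * -d j := by ring
        _ ≤ |d j| + d j * c j := by linarith
        _ ≤ _ := hsingle j

lemma abstainRisk_predOVA_sub_min_le (hα0 : 0 ≤ α) (hα1 : α ≤ 1 / 2) {τ : ℝ} (hτ : |τ| < 1)
    (hq0 : ∀ i, 0 ≤ q i) (hq : ∑ i, q i = 1) (u : Fin n → ℝ) :
    2 * (1 - |τ|) * (abstainRisk α q (predOVA n τ u) - abstainRiskMin α q) ≤
      psiRisk α q u - psiRiskMin α q := by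
  obtain ⟨t, -, ht⟩ := Finset.exists_mem_eq_inf' Finset.univ_nonempty (abstainRisk α q)
  rw [abstainRiskMin, ht]
  linarith [abstainRisk_predOVA_sub_le_psiExcessBound hα1 hτ hq0 hq u t,
    psiRiskMin_add_le_psiRisk hα0 (by linarith) hq0 hq u]

end ConditionalRisk

end Pointwise

section Disintegration

variable {X ι : Type*} [MeasurableSpace X] [MeasurableSpace ι] [StandardBorelSpace ι] [Nonempty ι]
  (D : Measure (X × ι)) [IsFiniteMeasure D]

noncomputable def condProb (x : X) (y : ι) : ℝ :=
  (D.condKernel x {y}).toReal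

lemma condProb_nonneg (x : X) (y : ι) : 0 ≤ condProb D x y := ENNReal.toReal_nonneg

lemma measurable_condProb : Measurable (condProb D) :=
  measurable_pi_lambda _ fun y =>
    (D.condKernel.measurable_coe (measurableSet_singleton y)).ennreal_toReal

variable [Fintype ι]

lemma sum_condProb (x : X) : ∑ y, condProb D x y = 1 := by
  simp only [condProb]
  rw [← ENNReal.toReal_sum fun _ _ => measure_ne_top _ _, sum_measure_singleton,
    Finset.coe_univ, measure_univ, ENNReal.toReal_one]

lemma lintegral_ofReal_eq_lintegral_condProb {ℓ : ι → X → ℝ} (hℓ : ∀ y, Measurable (ℓ y))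
    (hℓ0 : ∀ y x, 0 ≤ ℓ y x) :
    ∫⁻ z, ENNReal.ofReal (ℓ z.2 z.1) ∂D =
      ∫⁻ x, ENNReal.ofReal (∑ y, condProb D x y * ℓ y x) ∂D.fst := by
  rw [← Measure.lintegral_condKernel (measurable_from_prod_countable_left hℓ).ennreal_ofReal]
  refine lintegral_congr fun x => ?_
  rw [lintegral_fintype,
    ENNReal.ofReal_sum_of_nonneg fun y _ => mul_nonneg (condProb_nonneg D x y) (hℓ0 y x)]
  refine Finset.sum_congr rfl fun y _ => ?_
  rw [ENNReal.ofReal_mul (condProb_nonneg D x y), condProb,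
    ENNReal.ofReal_toReal (measure_ne_top _ _), mul_comm]

end Disintegration

lemma lintegral_tsub_le_div_of_mul_le {X : Type*} [MeasurableSpace X] {μ : Measure X}
    {F₁ F₂ G₁ G₂ : X → ℝ≥0∞} {k : ℝ≥0∞} (hk0 : k ≠ 0) (hk : k ≠ ∞) (hF₂ : AEMeasurable F₂ μ)
    (hG₂ : Measurable G₂) (hG₂fin : ∫⁻ x, G₂ x ∂μ ≠ ∞) (hG : G₂ ≤ᵐ[μ] G₁)
    (h : ∀ x, (F₁ x - F₂ x) * k ≤ G₁ x - G₂ x) :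
    ∫⁻ x, F₁ x ∂μ - ∫⁻ x, F₂ x ∂μ ≤ (∫⁻ x, G₁ x ∂μ - ∫⁻ x, G₂ x ∂μ) / k := by
  rw [ENNReal.le_div_iff_mul_le (.inl hk0) (.inl hk), ← lintegral_sub hG₂ hG₂fin hG]
  calc (∫⁻ x, F₁ x ∂μ - ∫⁻ x, F₂ x ∂μ) * k ≤ (∫⁻ x, F₁ x - F₂ x ∂μ) * k := by
        gcongr; exact lintegral_sub_le' _ _ hF₂
    _ = ∫⁻ x, (F₁ x - F₂ x) * k ∂μ := (lintegral_mul_const' _ _ hk).symm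
    _ ≤ _ := lintegral_mono h

lemma ofReal_sub_mul_ofReal_le {a b c d e : ℝ} (hb : 0 ≤ b) (hc : 0 ≤ c) (he : 0 ≤ e)
    (h : c * (a - b) ≤ d - e) :
    (ENNReal.ofReal a - ENNReal.ofReal b) * ENNReal.ofReal c ≤
      ENNReal.ofReal d - ENNReal.ofReal e := by
  rw [← ENNReal.ofReal_sub _ hb, ← ENNReal.ofReal_mul' hc, ← ENNReal.ofReal_sub _ he]
  exact ENNReal.ofReal_le_ofReal (by linarith)

section ExcessRisk

variable {n : ℕ} [NeZero n] {X : Type*} [MeasurableSpace X] (D : Measure (X × Fin n))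
  [IsFiniteMeasure D] {α : ℝ}

lemma lintegral_abstainLoss_eq (hα : 0 ≤ α) {h : X → Fin (n + 1)} (hh : Measurable h) :
    ∫⁻ z, ENNReal.ofReal (abstainLoss n α z.2 (h z.1)) ∂D =
      ∫⁻ x, ENNReal.ofReal (abstainRisk α (condProb D x) (h x)) ∂D.fst :=
  lintegral_ofReal_eq_lintegral_condProb D (ℓ := fun y x => abstainLoss n α y (h x))
    (fun y => (measurable_of_countable (abstainLoss n α y)).comp hh)
    fun y x => abstainLoss_nonneg hα y (h x)

lemma lintegral_psiOVAa_eq (hα0 : 0 ≤ α) (hα1 : α ≤ 1) {g : X → Fin n → ℝ} (hg : Measurable g) :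
    ∫⁻ z, ENNReal.ofReal (psiOVAa n α z.2 (g z.1)) ∂D =
      ∫⁻ x, ENNReal.ofReal (psiRisk α (condProb D x) (g x)) ∂D.fst :=
  lintegral_ofReal_eq_lintegral_condProb D (fun y => (continuous_psiOVAa y).measurable.comp hg)
    fun y x => psiOVAa_nonneg hα0 hα1 y (g x)

lemma lintegral_abstainRiskMin_le_iInf (hα : 0 ≤ α) :
    ∫⁻ x, ENNReal.ofReal (abstainRiskMin α (condProb D x)) ∂D.fst ≤
      ⨅ h : {h : X → Fin (n + 1) // Measurable h},
        ∫⁻ z, ENNReal.ofReal (abstainLoss n α z.2 (h.1 z.1)) ∂D := by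
  refine le_iInf fun h => ?_
  rw [lintegral_abstainLoss_eq D hα h.2]
  exact lintegral_mono fun x => ENNReal.ofReal_le_ofReal (Finset.inf'_le _ (Finset.mem_univ _))

lemma iInf_le_lintegral_psiRiskMin (hα0 : 0 ≤ α) (hα1 : α ≤ 1) :
    ⨅ g : {g : X → Fin n → ℝ // Measurable g},
        ∫⁻ z, ENNReal.ofReal (psiOVAa n α z.2 (g.1 z.1)) ∂D ≤
      ∫⁻ x, ENNReal.ofReal (psiRiskMin α (condProb D x)) ∂D.fst := by
  have hmin : Measurable fun x => psiMinimizer α (condProb D x) :=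
    measurable_pi_lambda _ fun i => Measurable.ite
      (measurableSet_le (measurable_pi_iff.1 (measurable_condProb D) i) measurable_const)
      measurable_const measurable_const
  refine (iInf_le _ ⟨_, hmin⟩).trans_eq ?_
  rw [lintegral_psiOVAa_eq D hα0 hα1 hmin]
  simp only [psiRisk_psiMinimizer (sum_condProb D _)]

lemma lintegral_psiRiskMin_ne_top :
    ∫⁻ x, ENNReal.ofReal (psiRiskMin α (condProb D x)) ∂D.fst ≠ ∞ := by
  refine ne_top_of_le_ne_top (b := ∫⁻ _, ENNReal.ofReal (4 * α) ∂D.fst) ?_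
    (lintegral_mono fun x => ENNReal.ofReal_le_ofReal (psiRiskMin_le (sum_condProb D x)))
  simp [ENNReal.mul_eq_top]

end ExcessRisk

theorem psiOVAa_excess_risk_bound (n : ℕ) (hn : 2 ≤ n)
    (α : ℝ) (hα0 : 0 ≤ α) (hα1 : α ≤ 1 / 2)
    (τ' : ℝ) (hτ0 : -1 < τ') (hτ1 : τ' < 1)
    {X : Type*} [MeasurableSpace X] (D : Measure (X × Fin n)) [IsProbabilityMeasure D]
    (g : X → Fin n → ℝ) (hg : Measurable g) :
    (∫⁻ z, ENNReal.ofReal (abstainLoss n α z.2 (predOVA n τ' (g z.1))) ∂D) -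
      (⨅ h : {h : X → Fin (n + 1) // Measurable h},
        ∫⁻ z, ENNReal.ofReal (abstainLoss n α z.2 (h.1 z.1)) ∂D) ≤
    ((∫⁻ z, ENNReal.ofReal (psiOVAa n α z.2 (g z.1)) ∂D) -
      (⨅ g' : {g' : X → Fin n → ℝ // Measurable g'},
        ∫⁻ z, ENNReal.ofReal (psiOVAa n α z.2 (g'.1 z.1)) ∂D)) /
      ENNReal.ofReal (2 * (1 - |τ'|)) := by
  have : NeZero n := ⟨by omega⟩
  have hα1' : α ≤ 1 := by linarith
  have hτ : |τ'| < 1 := abs_lt.2 ⟨hτ0, hτ1⟩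
  have hq0 := condProb_nonneg D
  have hq := sum_condProb D
  have hq_meas := measurable_condProb D
  rw [lintegral_abstainLoss_eq D hα0 (h := fun x => predOVA n τ' (g x))
      ((measurable_predOVA τ').comp hg),
    lintegral_psiOVAa_eq D hα0 hα1' hg]
  refine (tsub_le_tsub_left (lintegral_abstainRiskMin_le_iInf D hα0) _).trans <|
    le_trans ?_ (ENNReal.div_le_div_right
      (tsub_le_tsub_left (iInf_le_lintegral_psiRiskMin D hα0 hα1') _) _)
  exact lintegral_tsub_le_div_of_mul_le (by simp; linarith) ENNReal.ofReal_ne_top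
    (continuous_abstainRiskMin.measurable.comp hq_meas).ennreal_ofReal.aemeasurable
    (continuous_psiRiskMin.measurable.comp hq_meas).ennreal_ofReal
    (lintegral_psiRiskMin_ne_top D)
    (.of_forall fun x => ENNReal.ofReal_le_ofReal (psiRiskMin_le_psiRisk hα0 hα1' (hq0 x) (hq x) _))
    fun x => ofReal_sub_mul_ofReal_le (abstainRiskMin_nonneg hα0 (hq0 x)) (by linarith)
      (psiRiskMin_nonneg hα0 hα1' (hq0 x) (hq x))
      (abstainRisk_predOVA_sub_min_le hα0 hα1 hτ (hq0 x) (hq x) _)
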